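/- Define C(x, y) = (y−2)³ + x²·(64 − 16x² + x⁴ + (y−2)(32 − 5x²) + (y−2)²(7 − 5y²)). Then C(0, 2) = 0, and for every real a: lim_{w→0} C(−a·w³, 2·cos(w/2)) / w⁶ = 64a² − 1/64. Consequently, for a > 0 this limit vanishes if and only if a = 1/64. -/

import Mathlib

/-! Giving `x` weight 3 and `y - 2` weight 2, the weighted-leading part of `C` at `(0, 2)` is
`(y - 2) ^ 3 + 64 x ^ 2`. Along `x = -a w ^ 3`, `y = 2 cos (w / 2)` the half-angle formula gives
`y - 2 = -(w ^ 2 / 4) sinc (w / 4) ^ 2`, so `(y - 2) / w ^ 2 → -1/4` and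
`C / w ^ 6 → (-1/4) ^ 3 + 64 a ^ 2`. -/

open Filter Topology

/-- The defining polynomial of the projected character variety of the example. -/
noncomputable def Ccurve (x y : ℝ) : ℝ :=
  (y - 2) ^ 3 +
    x ^ 2 * (64 - 16 * x ^ 2 + x ^ 4 + (y - 2) * (32 - 5 * x ^ 2) +
      (y - 2) ^ 2 * (7 - 5 * y ^ 2))

theorem two_mul_cos_half_sub_two (w : ℝ) :
    2 * Real.cos (w / 2) - 2 = -(w ^ 2 / 4) * Real.sinc (w / 4) ^ 2 := by
  rcases eq_or_ne w 0 with rfl | hw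
  · simp
  have hcos : Real.cos (w / 2) = 1 - 2 * Real.sin (w / 4) ^ 2 := by
    rw [show w / 2 = 2 * (w / 4) by ring, Real.cos_two_mul, Real.cos_sq']
    ring
  rw [Real.sinc_of_ne_zero (by positivity), hcos]
  field_simp
  ring

theorem tendsto_two_mul_cos_half_sub_two_div_sq :
    Tendsto (fun w : ℝ => (2 * Real.cos (w / 2) - 2) / w ^ 2) (𝓝[≠] 0) (𝓝 (-1 / 4)) := by
  have hsinc : Tendsto (fun w : ℝ => -(1 / 4) * Real.sinc (w / 4) ^ 2) (𝓝[≠] 0)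
      (𝓝 (-(1 / 4) * Real.sinc (0 / 4) ^ 2)) :=
    ((by fun_prop : Continuous fun w : ℝ => -(1 / 4) * Real.sinc (w / 4) ^ 2).tendsto 0).mono_left
      nhdsWithin_le_nhds
  rw [zero_div, Real.sinc_zero, one_pow, mul_one, ← neg_div] at hsinc
  refine hsinc.congr' ?_
  filter_upwards [self_mem_nhdsWithin] with w hw
  rw [two_mul_cos_half_sub_two]
  field_simp [show w ≠ 0 from hw]

theorem tendsto_zero_of_tendsto_div_pow {f : ℝ → ℝ} {c : ℝ} {n : ℕ} (hn : n ≠ 0)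
    (hf : Tendsto (fun w => f w / w ^ n) (𝓝[≠] 0) (𝓝 c)) :
    Tendsto f (𝓝[≠] 0) (𝓝 0) := by
  have hpow : Tendsto (fun w : ℝ => w ^ n) (𝓝[≠] 0) (𝓝 0) := by
    simpa [zero_pow hn] using
      ((continuous_pow n).tendsto (0 : ℝ)).mono_left nhdsWithin_le_nhds
  have hlim := hf.mul hpow
  rw [mul_zero] at hlim
  refine hlim.congr' ?_
  filter_upwards [self_mem_nhdsWithin] with w hw
  field_simp [pow_ne_zero n (show w ≠ 0 from hw)]

theorem tendsto_Ccurve_div_pow_six {x y : ℝ → ℝ} {α β : ℝ}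
    (hx : Tendsto (fun w => x w / w ^ 3) (𝓝[≠] 0) (𝓝 α))
    (hy : Tendsto (fun w => (y w - 2) / w ^ 2) (𝓝[≠] 0) (𝓝 β)) :
    Tendsto (fun w => Ccurve (x w) (y w) / w ^ 6) (𝓝[≠] 0) (𝓝 (β ^ 3 + α ^ 2 * 64)) := by
  have hx₀ := tendsto_zero_of_tendsto_div_pow three_ne_zero hx
  have hy₂ : Tendsto y (𝓝[≠] 0) (𝓝 2) := by
    simpa using (tendsto_zero_of_tendsto_div_pow two_ne_zero hy).add_const 2
  have hcofactor : Tendsto (fun w => 64 - 16 * x w ^ 2 + x w ^ 4 + (y w - 2) * (32 - 5 * x w ^ 2) +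
      (y w - 2) ^ 2 * (7 - 5 * y w ^ 2)) (𝓝[≠] 0) (𝓝 64) := by
    have hcont : Continuous fun p : ℝ × ℝ => 64 - 16 * p.1 ^ 2 + p.1 ^ 4 +
        (p.2 - 2) * (32 - 5 * p.1 ^ 2) + (p.2 - 2) ^ 2 * (7 - 5 * p.2 ^ 2) := by
      fun_prop
    have hlim := (hcont.tendsto (0, 2)).comp (hx₀.prodMk_nhds hy₂)
    norm_num at hlim
    exact hlim
  refine ((hy.pow 3).add ((hx.pow 2).mul hcofactor)).congr' ?_
  filter_upwards [self_mem_nhdsWithin] with w hw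
  have hw : w ≠ 0 := hw
  simp only [Ccurve]
  field_simp

theorem character_variety_example (a : ℝ) :
    Ccurve 0 2 = 0 ∧
    Tendsto (fun w : ℝ => Ccurve (-a * w ^ 3) (2 * Real.cos (w / 2)) / w ^ 6)
      (𝓝[≠] 0) (𝓝 (64 * a ^ 2 - 1 / 64)) ∧
    (0 < a → (64 * a ^ 2 - 1 / 64 = 0 ↔ a = 1 / 64)) := by
  refine ⟨by norm_num [Ccurve], ?_, fun ha => ?_⟩
  · have hx : Tendsto (fun w : ℝ => -a * w ^ 3 / w ^ 3) (𝓝[≠] 0) (𝓝 (-a)) := by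
      refine tendsto_const_nhds.congr' ?_
      filter_upwards [self_mem_nhdsWithin] with w hw
      rw [neg_mul, neg_div, mul_div_cancel_right₀ _ (pow_ne_zero 3 (show w ≠ 0 from hw))]
    convert tendsto_Ccurve_div_pow_six hx tendsto_two_mul_cos_half_sub_two_div_sq using 2
    ring
  · have hfactor : 64 * a ^ 2 - 1 / 64 = 64 * (a + 1 / 64) * (a - 1 / 64) := by ring
    rw [hfactor, mul_eq_zero, mul_eq_zero, sub_eq_zero]
    constructor
    · rintro ((h | h) | h) <;> linarith
    · exact Or.inr
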